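/- arXiv:1904.10686 — 2 statements merged into one kernel-verified Lean document; each statement's English description precedes it below -/
import Mathlib

section
/- Under the standing hypotheses (with K contained in D_e): (i) for every g ∈ G and every nonzero x ∈ D_g, the map l ↦ x l x⁻¹ maps L onto L and is a field automorphism of L; (ii) this automorphism is independent of the choice of the nonzero element x ∈ D_g, so one obtains a group homomorphism ρ : G → Aut(L); (iii) the fixed field of ρ(G) in L is exactly K; (iv) letting H = ker ρ, the extension L/K is a Galois extension of fields and ρ induces a group isomorphism G/H ≅ Gal(L/K). -/
variable {G : Type*} [Group G] [DecidableEq G] {D : Type*} [DivisionRing D]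

/-- A faithful `G`-grading on `D`: a family of additive subgroups forming an internal
direct sum decomposition, multiplicative, with all components nonzero. -/
structure IsFaithfulGrading (𝒜 : G → AddSubgroup D) : Prop where
  one_mem : (1 : D) ∈ 𝒜 1
  mul_mem : ∀ {g h : G} {x y : D}, x ∈ 𝒜 g → y ∈ 𝒜 h → x * y ∈ 𝒜 (g * h)
  isInternal : DirectSum.IsInternal 𝒜
  faithful : ∀ g, 𝒜 g ≠ ⊥

/-- `L`, the center of the identity component `D_e`, as a set. -/
def Lset (𝒜 : G → AddSubgroup D) : Set D := {x | x ∈ 𝒜 1 ∧ ∀ y ∈ 𝒜 1, x * y = y * x}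

/-- The kernel of the conjugation action of `G` on `L`, as a set:
`{g ∈ G : x·l = l·x for every x ∈ D_g and every l ∈ L}`. -/
def Hset (𝒜 : G → AddSubgroup D) : Set G := {g | ∀ x ∈ 𝒜 g, ∀ l ∈ Lset 𝒜, x * l = l * x}

/-- The identity component `D_e` as a subring of `D`. -/
def De (𝒜 : G → AddSubgroup D) (hG : IsFaithfulGrading 𝒜) : Subring D where
  carrier := 𝒜 1
  zero_mem' := zero_mem _
  one_mem' := hG.one_mem
  add_mem' := fun ha hb => add_mem ha hb
  neg_mem' := fun ha => neg_mem ha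
  mul_mem' := fun ha hb => by simpa using hG.mul_mem ha hb

/-- `L`, the center of the identity component, as a subring of `D`. -/
def Lring (𝒜 : G → AddSubgroup D) (hG : IsFaithfulGrading 𝒜) : Subring D where
  carrier := Lset 𝒜
  zero_mem' := ⟨zero_mem _, fun y _ => by rw [zero_mul, mul_zero]⟩
  one_mem' := ⟨hG.one_mem, fun y _ => by rw [one_mul, mul_one]⟩
  add_mem' := fun ha hb => ⟨add_mem ha.1 hb.1, fun y hy => by
    rw [add_mul, mul_add, ha.2 y hy, hb.2 y hy]⟩
  neg_mem' := fun ha => ⟨neg_mem ha.1, fun y hy => by rw [neg_mul, mul_neg, ha.2 y hy]⟩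
  mul_mem' := fun {a b} ha hb => ⟨by simpa using hG.mul_mem ha.1 hb.1,
    fun y hy => by rw [mul_assoc, hb.2 y hy, ← mul_assoc, ha.2 y hy, mul_assoc]⟩

lemma Lring_le_De (𝒜 : G → AddSubgroup D) (hG : IsFaithfulGrading 𝒜) :
    Lring 𝒜 hG ≤ De 𝒜 hG := fun _ hx => hx.1

/-- `dim_L D_e`, the dimension of the identity component over its center `L`. -/
noncomputable def dimLDe (𝒜 : G → AddSubgroup D) (hG : IsFaithfulGrading 𝒜) : ℕ :=
  letI : Module ↥(Lring 𝒜 hG) ↥(De 𝒜 hG) :=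
    (Subring.inclusion (Lring_le_De 𝒜 hG)).toModule
  Module.finrank ↥(Lring 𝒜 hG) ↥(De 𝒜 hG)

section AuxLemmas
variable (𝒜 : G → AddSubgroup D)

lemma grading_sum_eq_zero [Fintype G] (hG : IsFaithfulGrading 𝒜) (f : ∀ g, 𝒜 g)
    (h : ∑ g, (f g : D) = 0) (g : G) : (f g : D) = 0 := by
  have key : (∑ k : G, DirectSum.of (fun k => ↥(𝒜 k)) k (f k)) = 0 := by
    apply hG.isInternal.injective
    rw [map_sum, map_zero]
    simpa using h
  have := DFunLike.congr_fun key g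
  rw [DFinsupp.finset_sum_apply] at this
  have h6 := Finset.sum_eq_single_of_mem (s := Finset.univ)
      (f := fun a : G => ((DirectSum.of (fun k => ↥(𝒜 k)) a (f a)) g : ↥(𝒜 g)))
      g (Finset.mem_univ g) (fun b _ hb => DirectSum.of_eq_of_ne _ _ _ hb.symm)
  rw [h6] at this
  simp only [DirectSum.of_eq_same] at this
  exact congrArg Subtype.val (this.trans (rfl : _ = (0 : ↥(𝒜 g))))

lemma grading_exists_sum [Fintype G] (hG : IsFaithfulGrading 𝒜) (x : D) :
    ∃ f : ∀ g, 𝒜 g, x = ∑ g, (f g : D) := by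
  obtain ⟨F, rfl⟩ := hG.isInternal.surjective x
  refine ⟨fun g => F g, ?_⟩
  conv_lhs => rw [← DirectSum.sum_univ_of F]
  rw [map_sum]
  simp

lemma grading_exists_ne_zero (hG : IsFaithfulGrading 𝒜) (g : G) : ∃ x : D, x ∈ 𝒜 g ∧ x ≠ 0 := by
  by_contra h
  push_neg at h
  exact hG.faithful g ((AddSubgroup.eq_bot_iff_forall _).2 fun x hx => h x hx)

lemma grading_inv_mem [Fintype G] (hG : IsFaithfulGrading 𝒜) {g : G} {x : D} (hx : x ∈ 𝒜 g) (hx0 : x ≠ 0) :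
    x⁻¹ ∈ 𝒜 g⁻¹ := by
  obtain ⟨f, hf⟩ := grading_exists_sum 𝒜 hG x⁻¹
  have hmem : ∀ k : G, x * (f (g⁻¹ * k) : D) - (if k = 1 then 1 else 0) ∈ 𝒜 k := by
    intro k
    have h1 : x * (f (g⁻¹ * k) : D) ∈ 𝒜 k := by
      simpa [mul_inv_cancel_left] using hG.mul_mem hx (f (g⁻¹ * k)).2
    split_ifs with hk
    · subst hk; exact sub_mem h1 hG.one_mem
    · simpa using h1
  have hsum : ∑ k : G, ((⟨_, hmem k⟩ : 𝒜 k) : D) = 0 := by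
    have h2 : ∑ k : G, x * (f (g⁻¹ * k) : D) = 1 := by
      have h3 : ∑ k : G, (f (g⁻¹ * k) : D) = ∑ h : G, (f h : D) :=
        Fintype.sum_equiv (Equiv.mulLeft g⁻¹) _ _ (fun k => rfl)
      rw [← Finset.mul_sum, h3, ← hf, mul_inv_cancel₀ hx0]
    rw [Finset.sum_sub_distrib, h2]
    simp
  have hz := fun k => grading_sum_eq_zero 𝒜 hG _ hsum k
  have hfz : ∀ h : G, h ≠ g⁻¹ → (f h : D) = 0 := by
    intro h hh
    obtain ⟨h', rfl⟩ : ∃ h', h = g⁻¹ * (g * h') := ⟨h, (inv_mul_cancel_left g h).symm⟩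
    have h4 : x * (f (g⁻¹ * (g * h')) : D) - (if g * h' = 1 then 1 else 0) = 0 := hz (g * h')
    have hk1 : g * h' ≠ 1 := fun hc => hh (by rw [hc, mul_one])
    rw [if_neg hk1, sub_zero] at h4
    exact (mul_eq_zero.mp h4).resolve_left hx0
  have hfin : x⁻¹ = (f g⁻¹ : D) := by
    rw [hf, Finset.sum_eq_single g⁻¹ (fun b _ hb => hfz b hb)
      (fun hg => absurd (Finset.mem_univ g⁻¹) hg)]
  rw [hfin]
  exact (f g⁻¹).2


-- conjugation maps L into L
lemma conj_mem_L [Fintype G] (hG : IsFaithfulGrading 𝒜) {g : G} {x : D}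
    (hx : x ∈ 𝒜 g) (hx0 : x ≠ 0) {l : D} (hl : l ∈ Lset 𝒜) :
    x * l * x⁻¹ ∈ Lset 𝒜 := by
  have hxinv := grading_inv_mem 𝒜 hG hx hx0
  constructor
  · simpa using hG.mul_mem (hG.mul_mem hx hl.1) hxinv
  · intro y hy
    have hyx : x⁻¹ * y * x ∈ 𝒜 1 := by
      simpa using hG.mul_mem (hG.mul_mem hxinv hy) hx
    have key := congrArg (fun t => x * t * x⁻¹) (hl.2 _ hyx)
    simp only [mul_assoc, mul_inv_cancel_left₀ hx0, inv_mul_cancel_left₀ hx0,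
      mul_inv_cancel₀ hx0, inv_mul_cancel₀ hx0, mul_one, one_mul] at key ⊢
    exact key

-- independence of choice of x
lemma conj_indep [Fintype G] (hG : IsFaithfulGrading 𝒜) {g : G} {x y : D}
    (hx : x ∈ 𝒜 g) (hy : y ∈ 𝒜 g) (hx0 : x ≠ 0) (hy0 : y ≠ 0)
    {l : D} (hl : l ∈ Lset 𝒜) : x * l * x⁻¹ = y * l * y⁻¹ := by
  have hyinv := grading_inv_mem 𝒜 hG hy hy0
  have hyx : y⁻¹ * x ∈ 𝒜 1 := by simpa using hG.mul_mem hyinv hx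
  have key := congrArg (fun t => y * t * x⁻¹) (hl.2 _ hyx)
  simp only [mul_assoc, mul_inv_cancel_left₀ hy0, inv_mul_cancel_left₀ hy0,
    mul_inv_cancel₀ hx0, inv_mul_cancel₀ hx0, mul_inv_cancel_left₀ hx0,
    mul_inv_cancel_right₀ hx0, mul_one, one_mul] at key ⊢
  exact key.symm

lemma mem_center_of_comm_homog [Fintype G] (hG : IsFaithfulGrading 𝒜) {l : D}
    (h : ∀ g : G, ∀ x ∈ 𝒜 g, x * l = l * x) : l ∈ Subring.center D := by
  rw [Subring.mem_center_iff]
  intro d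
  obtain ⟨f, rfl⟩ := grading_exists_sum 𝒜 hG d
  rw [Finset.sum_mul, Finset.mul_sum]
  exact Finset.sum_congr rfl fun g _ => h g _ (f g).2

open Classical in
noncomputable def Linv [Fintype G] (hG : IsFaithfulGrading 𝒜) (a : ↥(Lring 𝒜 hG)) :
    ↥(Lring 𝒜 hG) :=
  if h : (a : D) = 0 then 0 else
    ⟨(a : D)⁻¹, by simpa using grading_inv_mem 𝒜 hG a.2.1 h,
      fun y hy => (Commute.inv_left₀ (a.2.2 y hy)).eq⟩

lemma Linv_coe [Fintype G] (hG : IsFaithfulGrading 𝒜) (a : ↥(Lring 𝒜 hG)) :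
    (Linv 𝒜 hG a : D) = (a : D)⁻¹ := by
  unfold Linv
  split_ifs with h
  · simp [h]
  · rfl

@[reducible]
noncomputable def Lfield [Fintype G] (hG : IsFaithfulGrading 𝒜) : Field ↥(Lring 𝒜 hG) :=
  { (inferInstance : Ring ↥(Lring 𝒜 hG)) with
    mul_comm := fun a b => Subtype.ext (a.2.2 b b.2.1)
    inv := Linv 𝒜 hG
    exists_pair_ne := ⟨0, 1, fun h => one_ne_zero (α := D)
      (congrArg Subtype.val h).symm⟩
    mul_inv_cancel := fun a ha => by
      have h0 : (a : D) ≠ 0 := fun hc => ha (Subtype.ext hc)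
      apply Subtype.ext
      show (a : D) * (Linv 𝒜 hG a : D) = 1
      rw [Linv_coe, mul_inv_cancel₀ h0]
    inv_zero := by
      apply Subtype.ext
      show (Linv 𝒜 hG 0 : D) = 0
      rw [Linv_coe]
      simp
    nnqsmul := _
    qsmul := _ }

noncomputable def conjAut [Fintype G] (hG : IsFaithfulGrading 𝒜) {g : G} {x : D}
    (hx : x ∈ 𝒜 g) (hx0 : x ≠ 0) : RingAut ↥(Lring 𝒜 hG) where
  toFun l := ⟨x * l * x⁻¹, conj_mem_L 𝒜 hG hx hx0 l.2⟩
  invFun l := ⟨x⁻¹ * l * x, by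
    have h := conj_mem_L 𝒜 hG (grading_inv_mem 𝒜 hG hx hx0) (inv_ne_zero hx0) l.2
    rw [inv_inv] at h
    exact h⟩
  left_inv l := by
    apply Subtype.ext
    show x⁻¹ * (x * (l : D) * x⁻¹) * x = (l : D)
    simp only [mul_assoc, inv_mul_cancel_left₀ hx0, mul_inv_cancel_left₀ hx0,
      inv_mul_cancel₀ hx0, mul_inv_cancel₀ hx0, mul_one, one_mul]
  right_inv l := by
    apply Subtype.ext
    show x * (x⁻¹ * (l : D) * x) * x⁻¹ = (l : D)
    simp only [mul_assoc, inv_mul_cancel_left₀ hx0, mul_inv_cancel_left₀ hx0,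
      inv_mul_cancel₀ hx0, mul_inv_cancel₀ hx0, mul_one, one_mul]
  map_mul' a b := by
    apply Subtype.ext
    show x * ((a : D) * (b : D)) * x⁻¹ = (x * a * x⁻¹) * (x * b * x⁻¹)
    simp only [mul_assoc, inv_mul_cancel_left₀ hx0]
  map_add' a b := by
    apply Subtype.ext
    show x * ((a : D) + (b : D)) * x⁻¹ = (x * a * x⁻¹) + (x * b * x⁻¹)
    rw [mul_add, add_mul]

@[simp] lemma conjAut_apply [Fintype G] (hG : IsFaithfulGrading 𝒜) {g : G} {x : D}
    (hx : x ∈ 𝒜 g) (hx0 : x ≠ 0) (l : ↥(Lring 𝒜 hG)) :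
    (conjAut 𝒜 hG hx hx0 l : D) = x * (l : D) * x⁻¹ := rfl


end AuxLemmas

/-- Under the standing hypotheses with `K ⊆ D_e`: (i) conjugation by a
nonzero homogeneous element `x ∈ D_g` maps `L` onto `L` and is a field automorphism of
`L`; (ii) it is independent of the choice of `x ∈ D_g`, giving a homomorphism
`ρ : G → Aut(L)`; (iii) the fixed field of `ρ(G)` is exactly `K`; (iv) with `H = ker ρ`,
`L/K` is Galois and `ρ` induces an isomorphism `G/H ≅ Gal(L/K)` (equivalently, by
Artin's theorem: the fixed field of the image of `ρ` is `K` and the image of `ρ` is the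
full group of automorphisms of `L` fixing `K` pointwise). -/
theorem conjugation_action_and_galois
    [Finite G] [CharZero D]
    (𝒜 : G → AddSubgroup D) (hG : IsFaithfulGrading 𝒜)
    [Module.Finite ↥(Subring.center D) D]
    (hKe : (Subring.center D : Set D) ⊆ 𝒜 1)
    (ζ : D) (hζK : ζ ∈ Subring.center D)
    (hζ : orderOf ζ = Monoid.exponent G) :
    -- (i) conjugation maps `L` onto `L` (it is automatically a ring homomorphism)
    (∀ g : G, ∀ x ∈ 𝒜 g, x ≠ 0 →
      (∀ l ∈ Lset 𝒜, x * l * x⁻¹ ∈ Lset 𝒜) ∧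
      (∀ l' ∈ Lset 𝒜, ∃ l ∈ Lset 𝒜, x * l * x⁻¹ = l')) ∧
    -- (ii) the automorphism does not depend on the choice of `x ∈ D_g`
    (∀ g : G, ∀ x ∈ 𝒜 g, ∀ y ∈ 𝒜 g, x ≠ 0 → y ≠ 0 →
      ∀ l ∈ Lset 𝒜, x * l * x⁻¹ = y * l * y⁻¹) ∧
    -- (iii), (iv): there is `ρ : G →* Aut(L)` given by conjugation, whose kernel is `H`,
    -- whose fixed field is exactly `K`, and whose image is the full group of
    -- automorphisms of `L` fixing `K` pointwise (so `L/K` is Galois with group `G/H`)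
    ∃ ρ : G →* RingAut ↥(Lring 𝒜 hG),
      (∀ g : G, ∀ x ∈ 𝒜 g, x ≠ 0 →
        ∀ l : ↥(Lring 𝒜 hG), (ρ g l : D) = x * (l : D) * x⁻¹) ∧
      (∀ g : G, g ∈ MonoidHom.ker ρ ↔ g ∈ Hset 𝒜) ∧
      (∀ l : ↥(Lring 𝒜 hG), (∀ g : G, ρ g l = l) ↔ (l : D) ∈ Subring.center D) ∧
      (∀ σ : RingAut ↥(Lring 𝒜 hG),
        (∃ g : G, ρ g = σ) ↔ ∀ l : ↥(Lring 𝒜 hG), (l : D) ∈ Subring.center D → σ l = l) := by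
  classical
  letI : Fintype G := Fintype.ofFinite G
  choose xg hxg hxg0 using grading_exists_ne_zero 𝒜 hG
  have part1 : ∀ g : G, ∀ x ∈ 𝒜 g, x ≠ 0 →
      (∀ l ∈ Lset 𝒜, x * l * x⁻¹ ∈ Lset 𝒜) ∧
      (∀ l' ∈ Lset 𝒜, ∃ l ∈ Lset 𝒜, x * l * x⁻¹ = l') := by
    intro g x hx hx0
    refine ⟨fun l hl => conj_mem_L 𝒜 hG hx hx0 hl, fun l' hl' => ?_⟩
    have hxi := grading_inv_mem 𝒜 hG hx hx0
    have hmem : x⁻¹ * l' * (x⁻¹)⁻¹ ∈ Lset 𝒜 :=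
      conj_mem_L 𝒜 hG hxi (inv_ne_zero hx0) hl'
    rw [inv_inv] at hmem
    refine ⟨x⁻¹ * l' * x, hmem, ?_⟩
    simp only [mul_assoc, inv_mul_cancel_left₀ hx0, mul_inv_cancel_left₀ hx0,
      mul_inv_cancel₀ hx0, mul_one]
  have part2 : ∀ g : G, ∀ x ∈ 𝒜 g, ∀ y ∈ 𝒜 g, x ≠ 0 → y ≠ 0 →
      ∀ l ∈ Lset 𝒜, x * l * x⁻¹ = y * l * y⁻¹ :=
    fun g x hx y hy hx0 hy0 l hl => conj_indep 𝒜 hG hx hy hx0 hy0 hl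
  refine ⟨part1, part2, ?_⟩
  let ρ : G →* RingAut ↥(Lring 𝒜 hG) :=
  { toFun := fun g => conjAut 𝒜 hG (hxg g) (hxg0 g)
    map_one' := by
      ext l
      show xg 1 * (l : D) * (xg 1)⁻¹ = (l : D)
      rw [← l.2.2 (xg 1) (hxg 1), mul_assoc, mul_inv_cancel₀ (hxg0 1), mul_one]
    map_mul' := fun g h => by
      ext l
      have hmul : xg g * xg h ∈ 𝒜 (g * h) := hG.mul_mem (hxg g) (hxg h)
      have hmul0 : xg g * xg h ≠ 0 := mul_ne_zero (hxg0 g) (hxg0 h)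
      show xg (g * h) * (l : D) * (xg (g * h))⁻¹ =
        xg g * (xg h * (l : D) * (xg h)⁻¹) * (xg g)⁻¹
      rw [conj_indep 𝒜 hG (hxg (g * h)) hmul (hxg0 (g * h)) hmul0 l.2, mul_inv_rev]
      simp only [mul_assoc] }
  have hρ : ∀ (g : G) (x : D), x ∈ 𝒜 g → x ≠ 0 →
      ∀ l : ↥(Lring 𝒜 hG), (ρ g l : D) = x * (l : D) * x⁻¹ := by
    intro g x hx hx0 l
    show xg g * (l : D) * (xg g)⁻¹ = x * (l : D) * x⁻¹
    exact conj_indep 𝒜 hG (hxg g) hx (hxg0 g) hx0 l.2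
  have hc : ∀ l : ↥(Lring 𝒜 hG), (∀ g : G, ρ g l = l) ↔ (l : D) ∈ Subring.center D := by
    intro l
    constructor
    · intro hfix
      refine mem_center_of_comm_homog 𝒜 hG (fun k x hx => ?_)
      by_cases hx0 : x = 0
      · simp [hx0]
      · have h1 : (ρ k l : D) = (l : D) := congrArg Subtype.val (hfix k)
        rw [hρ k x hx hx0 l] at h1
        have h2 := congrArg (fun t => t * x) h1
        simpa only [mul_assoc, inv_mul_cancel₀ hx0, mul_one] using h2
    · intro hcen k
      apply Subtype.ext
      show xg k * (l : D) * (xg k)⁻¹ = (l : D)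
      rw [Subring.mem_center_iff.mp hcen (xg k), mul_assoc,
        mul_inv_cancel₀ (hxg0 k), mul_one]
  refine ⟨ρ, fun g x hx hx0 l => hρ g x hx hx0 l, ?_, hc, ?_⟩
  · -- kernel = Hset
    intro g
    constructor
    · intro hker
      intro x hx l hl
      by_cases hx0 : x = 0
      · simp [hx0]
      · have h1 : (ρ g ⟨l, hl⟩ : D) = l := by
          rw [MonoidHom.mem_ker] at hker
          rw [hker]
          rfl
        rw [hρ g x hx hx0 ⟨l, hl⟩] at h1
        have h2 := congrArg (fun t => t * x) h1
        simpa only [mul_assoc, inv_mul_cancel₀ hx0, mul_one] using h2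
    · intro hH
      rw [MonoidHom.mem_ker]
      ext l
      show xg g * (l : D) * (xg g)⁻¹ = (l : D)
      rw [hH (xg g) (hxg g) (l : D) l.2, mul_assoc, mul_inv_cancel₀ (hxg0 g), mul_one]
  · -- Galois
    intro σ
    constructor
    · rintro ⟨g, rfl⟩ l hl
      apply Subtype.ext
      show xg g * (l : D) * (xg g)⁻¹ = (l : D)
      rw [Subring.mem_center_iff.mp hl (xg g), mul_assoc,
        mul_inv_cancel₀ (hxg0 g), mul_one]
    · intro hσ
      letI : Field ↥(Lring 𝒜 hG) := Lfield 𝒜 hG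
      letI : MulSemiringAction ρ.range ↥(Lring 𝒜 hG) :=
        MulSemiringAction.compHom _ ρ.range.subtype
      haveI : Finite ρ.range := Finite.of_surjective
        (fun g : G => (⟨ρ g, g, rfl⟩ : ρ.range))
        (by rintro ⟨_, g, rfl⟩; exact ⟨g, rfl⟩)
      haveI : FaithfulSMul ρ.range ↥(Lring 𝒜 hG) :=
        ⟨fun {γ₁ γ₂} h => Subtype.ext (RingEquiv.ext fun l => h l)⟩
      have hfixmem : ∀ m : ↥(Lring 𝒜 hG),
          m ∈ FixedPoints.subfield ρ.range ↥(Lring 𝒜 hG) ↔ (m : D) ∈ Subring.center D := by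
        intro m
        rw [← hc m]
        constructor
        · intro hm g
          exact hm ⟨ρ g, g, rfl⟩
        · intro hm γ
          obtain ⟨g, hg⟩ := γ.2
          show γ.1 m = m
          rw [← hg]
          exact hm g
      let σ' : ↥(Lring 𝒜 hG) →ₐ[FixedPoints.subfield ρ.range ↥(Lring 𝒜 hG)] ↥(Lring 𝒜 hG) :=
        { toRingHom := (σ : ↥(Lring 𝒜 hG) →+* ↥(Lring 𝒜 hG))
          commutes' := fun r => hσ r.1 ((hfixmem r.1).1 r.2) }
      obtain ⟨γ, hγ⟩ := (@FixedPoints.toAlgHom_bijective ρ.range ↥(Lring 𝒜 hG) _ _ _ _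
        ⟨fun {γ₁ γ₂} h => Subtype.ext (RingEquiv.ext fun l => h l)⟩).2 σ'
      obtain ⟨g, hg⟩ := γ.2
      refine ⟨g, ?_⟩
      ext l
      have h1 := AlgHom.ext_iff.mp hγ l
      rw [MulSemiringAction.toAlgHom_apply] at h1
      have h2 : ρ g l = σ l := by
        calc ρ g l = γ.1 l := by rw [hg]
          _ = γ • l := rfl
          _ = σ' l := h1
          _ = σ l := rfl
      exact congrArg Subtype.val h2
end

section
/- Under the standing hypotheses, the center K of D is contained in the division subring D_H = ⊕_{h ∈ H} D_h. -/
open scoped DirectSum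


variable {G : Type*} [Group G] [DecidableEq G] {D : Type*} [DivisionRing D]

/-- `D_N`, the sum `⊕_{n ∈ N} D_n` of the homogeneous components over a subset `N` of
`G`, as an additive subgroup of `D`. -/
def DN (𝒜 : G → AddSubgroup D) (N : Set G) : AddSubgroup D := ⨆ g : N, 𝒜 (g : G)

omit [Group G] in
lemma coe_sum_eq' [Fintype G] (𝒜 : G → AddSubgroup D) (f : ⨁ g, 𝒜 g) :
    DirectSum.coeAddMonoidHom 𝒜 f = ∑ g, (f g : D) := by
  classical
  rw [DirectSum.coeAddMonoidHom_eq_dfinsuppSum, DFinsupp.sum]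
  refine Finset.sum_subset (Finset.subset_univ _) ?_
  intro g _ hg
  rw [DFinsupp.notMem_support_iff.mp hg, AddSubgroup.coe_zero]

omit [Group G] in
lemma comp_unique' [Fintype G] {𝒜 : G → AddSubgroup D}
    (hint : DirectSum.IsInternal 𝒜)
    {c₁ c₂ : G → D} (h1 : ∀ g, c₁ g ∈ 𝒜 g) (h2 : ∀ g, c₂ g ∈ 𝒜 g)
    (h : ∑ g, c₁ g = ∑ g, c₂ g) : ∀ g, c₁ g = c₂ g := by
  let f₁ : ⨁ g, 𝒜 g := DFinsupp.equivFunOnFintype.symm (fun g => ⟨c₁ g, h1 g⟩)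
  let f₂ : ⨁ g, 𝒜 g := DFinsupp.equivFunOnFintype.symm (fun g => ⟨c₂ g, h2 g⟩)
  have e1 : ∀ g, f₁ g = ⟨c₁ g, h1 g⟩ := fun g => rfl
  have e2 : ∀ g, f₂ g = ⟨c₂ g, h2 g⟩ := fun g => rfl
  have hf : f₁ = f₂ := hint.injective (by
    rw [coe_sum_eq', coe_sum_eq']
    rw [show (fun g => ((f₁ g : D))) = c₁ from funext fun g => by rw [e1],
        show (fun g => ((f₂ g : D))) = c₂ from funext fun g => by rw [e2]]
    exact h)
  intro g
  have := congrArg (fun f : ⨁ g, 𝒜 g => (f g : D)) hf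
  simpa [e1 g, e2 g] using this

omit [Group G] in
lemma exists_comp' [Fintype G] {𝒜 : G → AddSubgroup D}
    (hint : DirectSum.IsInternal 𝒜) (x : D) :
    ∃ c : G → D, (∀ g, c g ∈ 𝒜 g) ∧ ∑ g, c g = x := by
  obtain ⟨f, hf⟩ := hint.surjective x
  exact ⟨fun g => (f g : D), fun g => (f g).2, by rw [← coe_sum_eq' 𝒜 f, hf]⟩

lemma inv_mem_homog [Fintype G] {𝒜 : G → AddSubgroup D} (hG : IsFaithfulGrading 𝒜)
    {k : G} {a : D} (ha : a ∈ 𝒜 k) (h0 : a ≠ 0) : a⁻¹ ∈ 𝒜 k⁻¹ := by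
  obtain ⟨c, hc, hcs⟩ := exists_comp' hG.isInternal a⁻¹
  set c₁ : G → D := fun g => if g = 1 then 1 else 0 with hc₁def
  have hc₁ : ∀ g, c₁ g ∈ 𝒜 g := by
    intro g
    by_cases hg : g = 1
    · subst hg; simp [hc₁def, hG.one_mem]
    · simp only [hc₁def, if_neg hg]; exact zero_mem _
  set c₂ : G → D := fun g => a * c (k⁻¹ * g) with hc₂def
  have hc₂ : ∀ g, c₂ g ∈ 𝒜 g := by
    intro g
    have := hG.mul_mem ha (hc (k⁻¹ * g))
    rwa [mul_inv_cancel_left] at this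
  have hsum : ∑ g, c₂ g = ∑ g, c₁ g := by
    have h2 : ∑ g, c₂ g = a * ∑ g, c (k⁻¹ * g) := by
      rw [Finset.mul_sum]
    have h3 : ∑ g, c (k⁻¹ * g) = ∑ g, c g :=
      Fintype.sum_equiv (Equiv.mulLeft k⁻¹) _ _ (fun g => rfl)
    have h1 : ∑ g, c₁ g = 1 := by
      simp [hc₁def]
    rw [h2, h3, hcs, mul_inv_cancel₀ h0, h1]
  have key := comp_unique' hG.isInternal hc₂ hc₁ hsum
  have hzero : ∀ h : G, h ≠ k⁻¹ → c h = 0 := by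
    intro h hh
    have hg1 : k * h ≠ 1 := by
      intro hkh
      exact hh (eq_inv_of_mul_eq_one_right hkh)
    have := key (k * h)
    rw [hc₂def] at this
    simp only [inv_mul_cancel_left, hc₁def, if_neg hg1] at this
    rcases mul_eq_zero.mp this with h' | h'
    · exact absurd h' h0
    · exact h'
  have : a⁻¹ = c k⁻¹ := by
    rw [← hcs]
    exact (Finset.sum_eq_single k⁻¹ (fun h _ hh => hzero h hh)
      (fun h => absurd (Finset.mem_univ _) h))
  rw [this]
  exact hc k⁻¹

/-- Under the standing hypotheses, the center `K` of `D` is contained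
in the division subring `D_H = ⊕_{h ∈ H} D_h`. -/
theorem center_subset_DH
    [Finite G] [CharZero D]
    (𝒜 : G → AddSubgroup D) (hG : IsFaithfulGrading 𝒜)
    [Module.Finite ↥(Subring.center D) D]
    (ζ : D) (hζK : ζ ∈ Subring.center D) (hζe : ζ ∈ 𝒜 1)
    (hζ : orderOf ζ = Monoid.exponent G)
    (H : Subgroup G) (hHcar : (H : Set G) = Hset 𝒜) (hHn : H.Normal) :
    ∀ x ∈ Subring.center D, x ∈ DN 𝒜 (H : Set G) := by
  haveI : Fintype G := Fintype.ofFinite G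
  intro x hx
  have hxc : ∀ y : D, x * y = y * x := fun y =>
    ((Subring.mem_center_iff.mp hx) y).symm
  obtain ⟨c, hc, hcs⟩ := exists_comp' hG.isInternal x
  -- each component commutes with Lset
  have hcomm : ∀ g, ∀ l ∈ Lset 𝒜, c g * l = l * c g := by
    intro g l hl
    have hl1 : l ∈ 𝒜 1 := hl.1
    have m1 : ∀ g, c g * l ∈ 𝒜 g := fun g => by
      have := hG.mul_mem (hc g) hl1; rwa [mul_one] at this
    have m2 : ∀ g, l * c g ∈ 𝒜 g := fun g => by
      have := hG.mul_mem hl1 (hc g); rwa [one_mul] at this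
    have hsum : ∑ g, c g * l = ∑ g, l * c g := by
      rw [← Finset.sum_mul, ← Finset.mul_sum, hcs, hxc l]
    exact comp_unique' hG.isInternal m1 m2 hsum g
  -- nonzero components have degree in Hset
  have hdeg : ∀ g, c g ≠ 0 → g ∈ Hset 𝒜 := by
    intro g hg y hy l hl
    have hainv : (c g)⁻¹ ∈ 𝒜 g⁻¹ := inv_mem_homog hG (hc g) hg
    have hb : y * (c g)⁻¹ ∈ 𝒜 1 := by
      have := hG.mul_mem hy hainv
      rwa [mul_inv_cancel] at this
    have hbl : l * (y * (c g)⁻¹) = (y * (c g)⁻¹) * l := hl.2 _ hb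
    have hy' : y = (y * (c g)⁻¹) * c g := by
      rw [mul_assoc, inv_mul_cancel₀ hg, mul_one]
    calc y * l = ((y * (c g)⁻¹) * c g) * l := by rw [← hy']
      _ = (y * (c g)⁻¹) * (c g * l) := mul_assoc _ _ _
      _ = (y * (c g)⁻¹) * (l * c g) := by rw [hcomm g l hl]
      _ = ((y * (c g)⁻¹) * l) * c g := (mul_assoc _ _ _).symm
      _ = (l * (y * (c g)⁻¹)) * c g := by rw [hbl]
      _ = l * ((y * (c g)⁻¹) * c g) := mul_assoc _ _ _
      _ = l * y := by rw [← hy']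
  -- conclude
  rw [← hcs]
  refine AddSubgroup.sum_mem _ (fun g _ => ?_)
  by_cases hg : c g = 0
  · rw [hg]; exact zero_mem _
  · have hgH : g ∈ (H : Set G) := by rw [hHcar]; exact hdeg g hg
    exact (le_iSup (fun g : (H : Set G) => 𝒜 (g : G)) ⟨g, hgH⟩) (hc g)
end
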